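/- Let X be a real-valued random variable with law P, an atomless (continuous) distribution on ℝ with cumulative distribution function F. Then the random variable 2·Z, where Z = 2 F(X)(1 − F(X)) is the simplicial depth random variable, is distributed as a Beta(1, 1/2) distribution on [0,1]. -/

import Mathlib

/-!
When `F` is continuous, `F(X)` is uniform on `[0, 1]` (probability integral transform), so it is
enough to find the law of `4U(1 - U)` for `U` uniform on `[0, 1]`. Since
`1 - 4u(1 - u) = (2u - 1)²`, the event `4U(1 - U) ≤ t` is `|2U - 1| ≥ √(1 - t)`, of probability
`1 - √(1 - t)`, and this is also the integral of `(1/2)(1 - u)^(-1/2)` over `[0, t]`.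
-/

open MeasureTheory Set Filter ProbabilityTheory

theorem StieltjesFunction.continuous_of_measure_singleton {R : Type*} [LinearOrder R]
    [TopologicalSpace R] [OrderTopology R] [CompactIccSpace R] [MeasurableSpace R] [BorelSpace R]
    [SecondCountableTopology R] [DenselyOrdered R] (f : StieltjesFunction R)
    (hf : ∀ x, f.measure {x} = 0) : Continuous f := by
  refine continuous_iff_continuousAt.2 fun x => ?_
  have hleft : Function.leftLim f x = f x := by
    have hx := hf x
    rw [f.measure_singleton, ENNReal.ofReal_eq_zero, sub_nonpos] at hx
    exact le_antisymm (f.mono.leftLim_le le_rfl) hx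
  rw [f.mono.continuousAt_iff_leftLim_eq_rightLim, hleft, f.rightLim_eq]

theorem Monotone.exists_preimage_Iic_eq_Iic {α β : Type*} [ConditionallyCompleteLinearOrder α]
    [TopologicalSpace α] [OrderTopology α] [DenselyOrdered α] [NoMaxOrder α]
    [LinearOrder β] [TopologicalSpace β] [OrderClosedTopology β]
    {f : α → β} (hmono : Monotone f) (hcont : Continuous f) {a : β}
    (hle : ∃ x, f x ≤ a) (hlt : ∃ x, a < f x) : ∃ c, f c = a ∧ f ⁻¹' Iic a = Iic c := by
  obtain ⟨b, hb⟩ := hlt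
  have hbdd : BddAbove (f ⁻¹' Iic a) := ⟨b, fun y hy => (hmono.reflect_lt (hy.trans_lt hb)).le⟩
  set c := sSup (f ⁻¹' Iic a)
  have hc : f c ≤ a := (isClosed_Iic.preimage hcont).csSup_mem hle hbdd
  have hright : ∀ y ∈ Ioi c, a ≤ f y := fun y hy =>
    le_of_not_ge fun h => (not_le.2 hy) (le_csSup hbdd h)
  refine ⟨c, le_antisymm hc ?_, Subset.antisymm (fun y hy => le_csSup hbdd hy)
    fun y hy => (hmono hy).trans hc⟩
  exact _root_.ge_of_tendsto (hcont.continuousAt.tendsto.mono_left nhdsWithin_le_nhds)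
    (eventually_nhdsWithin_of_forall hright)

namespace ProbabilityTheory

variable (P : Measure ℝ) [IsProbabilityMeasure P] [NullSingletonClass P]

theorem continuous_cdf : Continuous (cdf P) :=
  (cdf P).continuous_of_measure_singleton fun x => by rw [measure_cdf]; exact measure_singleton x

theorem measure_preimage_cdf_Iic {a : ℝ} (ha : a < 1) :
    P (cdf P ⁻¹' Iic a) = ENNReal.ofReal a := by
  by_cases hle : ∃ x, cdf P x ≤ a
  · obtain ⟨c, hca, hpre⟩ := (monotone_cdf P).exists_preimage_Iic_eq_Iic (continuous_cdf P) hle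
      ((tendsto_cdf_atTop P).eventually (eventually_gt_nhds ha)).exists
    rw [hpre, ← ofReal_cdf, hca]
  · push Not at hle
    have ha0 : a ≤ 0 := ge_of_tendsto' (tendsto_cdf_atBot P) fun x => (hle x).le
    rw [ENNReal.ofReal_of_nonpos ha0, ← measure_empty (μ := P)]
    congr 1
    exact eq_empty_of_forall_notMem fun x hx => (hle x).not_ge hx

theorem map_cdf_eq_volume_restrict_Icc : P.map (cdf P) = volume.restrict (Icc 0 1) := by
  refine Measure.ext_of_Iic _ _ fun a => ?_
  rw [Measure.map_apply (continuous_cdf P).measurable measurableSet_Iic,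
    Measure.restrict_apply measurableSet_Iic,
    show Iic a ∩ Icc 0 1 = Icc 0 (min a 1) by ext; simp [and_left_comm], Real.volume_Icc, sub_zero]
  rcases lt_or_ge a 1 with ha | ha
  · rw [min_eq_left ha.le, measure_preimage_cdf_Iic P ha]
  · rw [min_eq_right ha, ENNReal.ofReal_one, ← measure_univ (μ := P)]
    congr 1
    exact eq_univ_of_forall fun x => (cdf_le_one P x).trans ha

end ProbabilityTheory

theorem Real.volume_Icc_zero_one_sdiff_Ioo {s : ℝ} (hs : 0 ≤ s) :
    volume (Icc (0 : ℝ) 1 \ Ioo ((1 - s) / 2) ((1 + s) / 2)) = ENNReal.ofReal (1 - s) := by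
  rcases le_or_gt s 1 with hs₁ | hs₁
  · rw [measure_sdiff (Ioo_subset_Icc_self.trans (Icc_subset_Icc (by linarith) (by linarith)))
      nullMeasurableSet_Ioo measure_Ioo_lt_top.ne, Real.volume_Icc, Real.volume_Ioo,
      show (1 + s) / 2 - (1 - s) / 2 = s by ring, sub_zero, ENNReal.ofReal_sub _ hs]
  · rw [sdiff_eq_empty.2 (Icc_subset_Ioo (by linarith) (by linarith)), measure_empty,
      ENNReal.ofReal_of_nonpos (by linarith)]

theorem integral_one_half_mul_one_sub_rpow_neg_half (m : ℝ) :
    ∫ u in (0 : ℝ)..m, 1 / 2 * (1 - u) ^ (-(1 / 2 : ℝ)) = 1 - √(1 - m) := by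
  rw [intervalIntegral.integral_const_mul, intervalIntegral.integral_comp_sub_left
    (fun x : ℝ => x ^ (-(1 / 2 : ℝ))), integral_rpow (Or.inl (by norm_num)), Real.sqrt_eq_rpow]
  norm_num
  ring

theorem setLIntegral_Icc_one_half_mul_one_sub_rpow_neg_half {m : ℝ} (hm₀ : 0 ≤ m) (hm₁ : m ≤ 1) :
    ∫⁻ u in Icc 0 m, ENNReal.ofReal (1 / 2 * (1 - u) ^ (-(1 / 2 : ℝ))) =
      ENNReal.ofReal (1 - √(1 - m)) := by
  have hint : IntervalIntegrable (fun u : ℝ => 1 / 2 * (1 - u) ^ (-(1 / 2 : ℝ))) volume 0 m := by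
    have := ((intervalIntegral.intervalIntegrable_rpow' (r := -(1 / 2 : ℝ)) (by norm_num)
      (a := 1 - m) (b := 1)).comp_sub_left 1).const_mul (1 / 2)
    simpa using this.symm
  rw [← ofReal_integral_eq_lintegral_ofReal, integral_Icc_eq_integral_Ioc,
    ← intervalIntegral.integral_of_le hm₀, integral_one_half_mul_one_sub_rpow_neg_half]
  · exact (intervalIntegrable_iff_integrableOn_Icc_of_le hm₀).1 hint
  · filter_upwards [ae_restrict_mem measurableSet_Icc] with u hu
    have : 0 ≤ 1 - u := by linarith [hu.2]
    positivity

namespace SimplicialDepth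

noncomputable def betaOneHalfDensity (u : ℝ) : ENNReal :=
  ENNReal.ofReal (indicator (Icc (0 : ℝ) 1) (fun u => 1 / 2 * (1 - u) ^ (-(1 / 2 : ℝ))) u)

/-- For `t > 1` the junk value `√(1 - t) = 0` makes the right side `1`, and for `t < 0`
`ENNReal.ofReal` clamps it to `0`. -/
theorem withDensity_betaOneHalfDensity_Iic (t : ℝ) :
    volume.withDensity betaOneHalfDensity (Iic t) = ENNReal.ofReal (1 - √(1 - t)) := by
  have hind : ∀ u, betaOneHalfDensity u = indicator (Icc (0 : ℝ) 1)
      (fun u => ENNReal.ofReal (1 / 2 * (1 - u) ^ (-(1 / 2 : ℝ)))) u :=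
    fun u => (congr_fun (indicator_comp_of_zero ENNReal.ofReal_zero) u).symm
  simp only [withDensity_apply _ measurableSet_Iic, hind]
  rw [lintegral_indicator measurableSet_Icc, Measure.restrict_restrict measurableSet_Icc,
    show Icc 0 1 ∩ Iic t = Icc 0 (min t 1) by
      ext; simp only [mem_inter_iff, mem_Icc, mem_Iic, le_min_iff]; tauto]
  rcases lt_or_ge t 0 with ht | ht
  · have hsqrt : 1 ≤ √(1 - t) := Real.one_le_sqrt.2 (by linarith)
    rw [Icc_eq_empty (by simp [ht]), Measure.restrict_empty, lintegral_zero_measure,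
      ENNReal.ofReal_of_nonpos (by linarith)]
  · rw [setLIntegral_Icc_one_half_mul_one_sub_rpow_neg_half (le_min ht zero_le_one)
      (min_le_right t 1)]
    rcases le_total t 1 with ht₁ | ht₁
    · rw [min_eq_left ht₁]
    · rw [min_eq_right ht₁, sub_self, Real.sqrt_zero, Real.sqrt_eq_zero'.2 (by linarith)]

theorem preimage_Iic_eq_compl_Ioo (t : ℝ) :
    (fun u : ℝ => 2 * (2 * u * (1 - u))) ⁻¹' Iic t =
      (Ioo ((1 - √(1 - t)) / 2) ((1 + √(1 - t)) / 2))ᶜ := by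
  ext u
  have key : 2 * (2 * u * (1 - u)) ≤ t ↔ √(1 - t) ≤ |2 * u - 1| := by
    rw [Real.sqrt_le_left (abs_nonneg _), sq_abs]
    constructor <;> intro h <;> nlinarith
  simp only [mem_preimage, mem_Iic, key, le_abs', mem_compl_iff, mem_Ioo, not_and_or, not_lt]
  constructor <;> rintro (h | h) <;> [left; right; left; right] <;> linarith

theorem map_volume_restrict_Icc :
    (volume.restrict (Icc (0 : ℝ) 1)).map (fun u => 2 * (2 * u * (1 - u))) =
      volume.withDensity betaOneHalfDensity := by
  have hmeas : Measurable fun u : ℝ => 2 * (2 * u * (1 - u)) := by fun_prop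
  refine Measure.ext_of_Iic _ _ fun t => ?_
  rw [Measure.map_apply hmeas measurableSet_Iic, Measure.restrict_apply (hmeas measurableSet_Iic),
    preimage_Iic_eq_compl_Ioo, inter_comm, ← sdiff_eq,
    Real.volume_Icc_zero_one_sdiff_Ioo (Real.sqrt_nonneg _), withDensity_betaOneHalfDensity_Iic]

end SimplicialDepth

theorem two_simplicial_depth_beta
    (P : Measure ℝ) [IsProbabilityMeasure P] [NullSingletonClass P]
    (F : ℝ → ℝ) (hF : ∀ x, F x = (P (Iic x)).toReal) :
    Measure.map (fun x => 2 * (2 * F x * (1 - F x))) P =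
      volume.withDensity (fun t => ENNReal.ofReal
        (indicator (Icc (0 : ℝ) 1) (fun t => (1 / 2) * (1 - t) ^ (-(1 / 2 : ℝ))) t)) := by
  obtain rfl : F = cdf P := funext fun x => by rw [hF, cdf_eq_real, measureReal_def]
  calc P.map (fun x => 2 * (2 * cdf P x * (1 - cdf P x)))
      = (P.map (cdf P)).map (fun u => 2 * (2 * u * (1 - u))) :=
        (Measure.map_map (g := fun u => 2 * (2 * u * (1 - u))) (by fun_prop)
          (continuous_cdf P).measurable).symm
    _ = (volume.restrict (Icc 0 1)).map (fun u => 2 * (2 * u * (1 - u))) := by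
        rw [map_cdf_eq_volume_restrict_Icc]
    _ = volume.withDensity SimplicialDepth.betaOneHalfDensity :=
        SimplicialDepth.map_volume_restrict_Icc
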